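/- arXiv:2003.13671 — 2 statements merged into one kernel-verified Lean document; each statement's English description precedes it below -/
import Mathlib

section
/- Let s and t be coprime positive integers. The set A = ℕ \ (sℕ + tℕ) of nonnegative integers not representable as a nonnegative integer combination of s and t has exactly (s−1)(t−1)/2 elements. -/
/-!
Put `F = st - s - t`. A gap `n` can be written `a s - (c + 1) t` with `0 ≤ a < t`, which forces
`n ≤ F` and exhibits `F - n = (t - 1 - a) s + c t` as representable. Conversely `n` and `F - n`
are never both representable, since `F` itself is not. So `n ↦ F - n` swaps the gaps with the
representable numbers in `[0, F]`, and the gaps make up half of these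
`F + 1 = (s - 1)(t - 1)` numbers.
-/

open Finset

def Representable (s t n : ℕ) : Prop := ∃ a b : ℕ, n = a * s + b * t

section

variable {s t : ℕ}

lemma Representable.add {m n : ℕ} (hm : Representable s t m) (hn : Representable s t n) :
    Representable s t (m + n) := by
  obtain ⟨a, b, rfl⟩ := hm
  obtain ⟨a', b', rfl⟩ := hn
  exact ⟨a + a', b + b', by ring⟩

lemma not_representable_frobenius (hst : Nat.Coprime s t) (hs : 1 < s) (ht : 1 < t) :
    ¬ Representable s t (s * t - s - t) := by
  rintro ⟨a, b, hab⟩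
  refine hst.mul_add_mul_ne_mul (a := a + 1) (b := b + 1) (by omega) (by omega) ?_
  have := Nat.add_le_mul hs ht
  calc (a + 1) * s + (b + 1) * t = (a * s + b * t) + s + t := by ring
    _ = s * t := by omega

lemma Nat.Coprime.exists_int_eq_mul_add_mul (hst : Nat.Coprime s t) (ht : 0 < t) (n : ℤ) :
    ∃ a : ℕ, a < t ∧ ∃ b : ℤ, n = a * s + b * t := by
  obtain ⟨u, v, huv⟩ := hst.isCoprime
  have ht' : (0 : ℤ) < t := by exact_mod_cast ht
  obtain ⟨a, ha⟩ := Int.eq_ofNat_of_zero_le (Int.emod_nonneg (n * u) ht'.ne')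
  refine ⟨a, by have := Int.emod_lt_of_pos (n * u) ht'; omega, n * v + n * u / t * s, ?_⟩
  rw [← ha]
  linear_combination (-n) * huv - (s : ℤ) * Int.emod_add_mul_ediv (n * u) t

lemma exists_add_mul_eq_mul_of_not_representable (hst : Nat.Coprime s t) (ht : 0 < t) {n : ℕ}
    (hn : ¬ Representable s t n) : ∃ a c : ℕ, a < t ∧ n + (c + 1) * t = a * s := by
  obtain ⟨a, hat, b, hab⟩ := hst.exists_int_eq_mul_add_mul ht n
  obtain ⟨c, rfl⟩ : ∃ c : ℕ, b = -(c + 1) := by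
    rcases le_or_gt 0 b with hb | hb
    · lift b to ℕ using hb
      exact absurd ⟨a, b, by exact_mod_cast hab⟩ hn
    · exact ⟨(-b - 1).toNat, by omega⟩
  exact ⟨a, c, hat, by zify; linear_combination hab⟩

lemma le_frobenius_of_not_representable (hst : Nat.Coprime s t) (ht : 0 < t) {n : ℕ}
    (hn : ¬ Representable s t n) : n ≤ s * t - s - t := by
  obtain ⟨a, c, hat, hac⟩ := exists_add_mul_eq_mul_of_not_representable hst ht hn
  have := Nat.mul_le_mul_right s (show a + 1 ≤ t from hat)
  rw [add_mul, Nat.mul_comm t s] at this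
  rw [add_mul] at hac
  omega

lemma representable_frobenius_sub_of_not_representable (hst : Nat.Coprime s t) (ht : 0 < t)
    {n : ℕ} (hn : ¬ Representable s t n) : Representable s t (s * t - s - t - n) := by
  have hnF := le_frobenius_of_not_representable hst ht hn
  obtain ⟨a, c, hat, hac⟩ := exists_add_mul_eq_mul_of_not_representable hst ht hn
  refine ⟨t - 1 - a, c, ?_⟩
  have hst' : s + t ≤ s * t := by nlinarith
  zify [hnF, show t ≤ s * t - s by omega, show s ≤ s * t by omega,
    show a ≤ t - 1 by omega, show 1 ≤ t from ht] at hac ⊢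
  linear_combination -hac

lemma representable_frobenius_sub_iff (hst : Nat.Coprime s t) (hs : 1 < s) (ht : 1 < t) {n : ℕ}
    (hn : n ≤ s * t - s - t) :
    Representable s t (s * t - s - t - n) ↔ ¬ Representable s t n := by
  refine ⟨fun hF hn' => not_representable_frobenius hst hs ht ?_,
    representable_frobenius_sub_of_not_representable hst (by omega)⟩
  simpa only [Nat.add_sub_cancel' hn] using hn'.add hF

end

lemma card_filter_not_mul_two_eq_of_swap {N : ℕ} {p : ℕ → Prop} [DecidablePred p]
    (h : ∀ n < N, p (N - 1 - n) ↔ ¬ p n) : #{n ∈ range N | ¬ p n} * 2 = N := by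
  have hswap : #{n ∈ range N | p n} = #{n ∈ range N | ¬ p n} := by
    refine card_nbij' (N - 1 - ·) (N - 1 - ·) ?_ ?_ ?_ ?_ <;> intro n hn <;>
      simp only [mem_coe, mem_filter, mem_range] at hn ⊢
    · have := h (N - 1 - n) (by omega)
      rw [Nat.sub_sub_self (by omega)] at this
      exact ⟨by omega, this.mp hn.2⟩
    · exact ⟨by omega, (h n hn.1).mpr hn.2⟩
    all_goals omega
  calc #{n ∈ range N | ¬ p n} * 2 = #{n ∈ range N | p n} + #{n ∈ range N | ¬ p n} := by
        rw [hswap, mul_two]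
    _ = N := by rw [card_filter_add_card_filter_not, card_range]

theorem stmt10 (s t : ℕ) (hs : 0 < s) (ht : 0 < t) (hst : Nat.Coprime s t)
    (A : Finset ℕ) (hA : ∀ n : ℕ, n ∈ A ↔ ¬ ∃ a b : ℕ, n = a * s + b * t) :
    A.card * 2 = (s - 1) * (t - 1) := by
  classical
  by_cases hdeg : s = 1 ∨ t = 1
  · have hrep (n : ℕ) : Representable s t n := by
      rcases hdeg with rfl | rfl
      exacts [⟨n, 0, by ring⟩, ⟨0, n, by ring⟩]
    rw [eq_empty_of_forall_notMem fun n hn => (hA n).mp hn (hrep n)]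
    rcases hdeg with rfl | rfl <;> simp
  have hs : 1 < s := by omega
  have ht : 1 < t := by omega
  have hgaps : A = {n ∈ range (s * t - s - t + 1) | ¬ Representable s t n} := by
    ext n
    simp only [mem_filter, mem_range, hA]
    exact ⟨fun hn => ⟨Nat.lt_succ_of_le (le_frobenius_of_not_representable hst (by omega) hn),
      hn⟩, And.right⟩
  have hcount : s * t - s - t + 1 = (s - 1) * (t - 1) := by
    obtain ⟨s, rfl⟩ := Nat.exists_eq_add_of_lt hs
    obtain ⟨t, rfl⟩ := Nat.exists_eq_add_of_lt ht
    simp only [Nat.add_sub_cancel]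
    ring_nf
    omega
  rw [hgaps, card_filter_not_mul_two_eq_of_swap, hcount]
  intro n hn
  simpa only [Nat.add_sub_cancel] using representable_frobenius_sub_iff hst hs ht (by omega)
end

section
/- Let s and t be coprime positive integers and let A = ℕ \ (sℕ + tℕ) be the set of non-representable numbers. Then the sum of the elements of A minus C(|A|, 2) equals (s²−1)(t²−1)/24; equivalently, the unique largest (s,t)-core partition has (s²−1)(t²−1)/24 boxes. -/
open Finset

private lemma gauss1 (m : ℕ) : 2 * ∑ i ∈ Finset.range m, (i : ℤ) = m * (m - 1) := by
  induction m with
  | zero => simp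
  | succ n ih =>
    rw [Finset.sum_range_succ]
    push_cast
    push_cast at ih
    linear_combination ih

private lemma gauss2 (m : ℕ) :
    6 * ∑ i ∈ Finset.range m, (i : ℤ) ^ 2 = m * (m - 1) * (2 * m - 1) := by
  induction m with
  | zero => simp
  | succ n ih =>
    rw [Finset.sum_range_succ]
    push_cast
    push_cast at ih
    linear_combination ih

private lemma sumlin (m : ℕ) (C D : ℤ) :
    2 * ∑ b ∈ Finset.range m, (C - (b + 1) * D)
      = 2 * m * C - D * m * (m - 1) - 2 * m * D := by
  induction m with
  | zero => simp
  | succ n ih =>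
    rw [Finset.sum_range_succ]
    push_cast
    push_cast at ih
    linear_combination ih

private lemma choose2 (n : ℕ) : 2 * (n.choose 2 : ℤ) = n * (n - 1) := by
  cases n with
  | zero => simp
  | succ m =>
    have h : (m + 1).choose 2 * 2 = (m + 1) * m := by
      rw [Nat.choose_two_right]
      simp only [Nat.add_sub_cancel]
      exact Nat.div_mul_cancel (by rw [mul_comm]; exact (Nat.even_mul_succ_self m).two_dvd)
    have := congrArg (Nat.cast (R := ℤ)) h
    push_cast at this ⊢
    linarith

theorem stmt11 (s t : ℕ) (hs : 0 < s) (ht : 0 < t) (hst : Nat.Coprime s t)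
    (A : Finset ℕ) (hA : ∀ n : ℕ, n ∈ A ↔ ¬ ∃ a b : ℕ, n = a * s + b * t) :
    24 * ((∑ a ∈ A, (a : ℤ)) - (A.card.choose 2 : ℤ))
      = ((s : ℤ) ^ 2 - 1) * ((t : ℤ) ^ 2 - 1) := by
  classical
  set f : ℕ → ℕ := fun a => a * s / t with hf
  set r : ℕ → ℕ := fun a => a * s % t with hr
  -- injectivity of a ↦ a*s % t on range t
  have hinj : ∀ a ∈ Finset.range t, ∀ b ∈ Finset.range t, a * s % t = b * s % t → a = b := by
    intro a ha b hb h
    simp only [Finset.mem_range] at ha hb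
    have h2 : a ≡ b [MOD t] :=
      Nat.ModEq.cancel_right_of_coprime (by simpa [Nat.coprime_comm] using hst) h
    have : a % t = b % t := h2
    rw [Nat.mod_eq_of_lt ha, Nat.mod_eq_of_lt hb] at this
    exact this
  have himg : (Finset.range t).image (fun a => a * s % t) = Finset.range t := by
    apply Finset.eq_of_subset_of_card_le
    · intro x hx
      simp only [Finset.mem_image, Finset.mem_range] at hx ⊢
      obtain ⟨a, _, rfl⟩ := hx
      exact Nat.mod_lt _ ht
    · rw [Finset.card_image_of_injOn fun a ha b hb h =>
        hinj a (Finset.mem_coe.mp ha) b (Finset.mem_coe.mp hb) h]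
  have hperm : ∀ g : ℕ → ℤ,
      ∑ a ∈ Finset.range t, g (a * s % t) = ∑ x ∈ Finset.range t, g x := by
    intro g
    conv_rhs => rw [← himg]
    rw [Finset.sum_image hinj]
  -- characterization of non-representable numbers
  have hrep : ∀ n : ℕ,
      (¬ ∃ a b : ℕ, n = a * s + b * t) ↔ ∃ a, a < t ∧ ∃ b, n + (b + 1) * t = a * s := by
    intro n
    constructor
    · intro hn
      have hx : n % t ∈ Finset.range t := Finset.mem_range.mpr (Nat.mod_lt _ ht)
      rw [← himg] at hx
      obtain ⟨a, ha, hae⟩ := Finset.mem_image.mp hx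
      rw [Finset.mem_range] at ha
      by_cases hle : a * s ≤ n
      · exfalso
        apply hn
        have hdvd : t ∣ n - a * s := (Nat.modEq_iff_dvd' hle).mp hae
        obtain ⟨c, hc⟩ := hdvd
        exact ⟨a, c, by rw [mul_comm c t]; omega⟩
      · push_neg at hle
        have hae' : n ≡ a * s [MOD t] := hae.symm
        have hdvd : t ∣ a * s - n := (Nat.modEq_iff_dvd' hle.le).mp hae'
        obtain ⟨c, hc⟩ := hdvd
        rcases Nat.eq_zero_or_pos c with h0 | h1
        · exfalso; subst h0; simp at hc; omega
        refine ⟨a, ha, c - 1, ?_⟩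
        have hcc : c - 1 + 1 = c := by omega
        rw [hcc, mul_comm, ← hc, Nat.add_sub_cancel' hle.le]
    · rintro ⟨a, ha, b, hab⟩ ⟨x, y, rfl⟩
      have hbt : (b + 1) * t = b * t + t := by ring
      have hxa : x < a := by
        by_contra hxa
        push_neg at hxa
        have hms : a * s ≤ x * s := Nat.mul_le_mul_right s hxa
        omega
      have hres : x * s % t = a * s % t := by
        have h1 : a * s = x * s + (y + b + 1) * t := by rw [← hab]; ring
        rw [h1, Nat.add_mul_mod_self_right]
      have := hinj x (Finset.mem_range.mpr (by omega)) a (Finset.mem_range.mpr ha) hres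
      omega
  -- the explicit description of A
  set G : ℕ → Finset ℕ := fun a => (Finset.range (f a)).image (fun b => a * s - (b + 1) * t)
    with hG
  have hble : ∀ a b, b < f a → (b + 1) * t ≤ a * s := by
    intro a b hb
    calc (b + 1) * t ≤ f a * t := Nat.mul_le_mul_right t hb
    _ ≤ a * s := Nat.div_mul_le_self _ t
  have hGmem : ∀ a n, n ∈ G a ↔ ∃ b, b < f a ∧ n + (b + 1) * t = a * s := by
    intro a n
    simp only [hG, Finset.mem_image, Finset.mem_range]
    constructor
    · rintro ⟨b, hb, rfl⟩
      exact ⟨b, hb, by have := hble a b hb; omega⟩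
    · rintro ⟨b, hb, he⟩
      exact ⟨b, hb, by omega⟩
  have hAB : A = (Finset.range t).biUnion G := by
    ext n
    rw [hA n, Finset.mem_biUnion, hrep n]
    constructor
    · rintro ⟨a, ha, b, he⟩
      refine ⟨a, Finset.mem_range.mpr ha, (hGmem a n).mpr ⟨b, ?_, he⟩⟩
      have h1 : (b + 1) * t ≤ a * s := by omega
      exact (Nat.le_div_iff_mul_le ht).mpr h1
    · rintro ⟨a, ha, hn⟩
      rw [Finset.mem_range] at ha
      obtain ⟨b, hb, he⟩ := (hGmem a n).mp hn
      exact ⟨a, ha, b, he⟩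
  have hdisj : ∀ a ∈ Finset.range t, ∀ b ∈ Finset.range t, a ≠ b → Disjoint (G a) (G b) := by
    intro a ha b hb hab
    rw [Finset.disjoint_left]
    intro n hna hnb
    obtain ⟨x, hx, hex⟩ := (hGmem a n).mp hna
    obtain ⟨y, hy, hey⟩ := (hGmem b n).mp hnb
    apply hab
    apply hinj a ha b hb
    have h1 : a * s % t = n % t := by rw [← hex, Nat.add_mul_mod_self_right]
    have h2 : b * s % t = n % t := by rw [← hey, Nat.add_mul_mod_self_right]
    rw [h1, h2]
  have hGinj : ∀ a, Set.InjOn (fun b => a * s - (b + 1) * t) (Finset.range (f a)) := by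
    intro a b hb c hc h
    simp only [Finset.coe_range, Set.mem_Iio] at hb hc
    have h1 := hble a b hb
    have h2 := hble a c hc
    simp only at h
    have h3 : (b + 1) * t = (c + 1) * t := by omega
    have h4 := Nat.eq_of_mul_eq_mul_right ht h3
    omega
  -- card and sum
  have hcard : (A.card : ℤ) = ∑ a ∈ Finset.range t, (f a : ℤ) := by
    rw [hAB, Finset.card_biUnion hdisj]
    push_cast
    refine Finset.sum_congr rfl fun a _ => ?_
    rw [Finset.card_image_of_injOn (hGinj a), Finset.card_range]
  have hsum : ∑ n ∈ A, (n : ℤ)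
      = ∑ a ∈ Finset.range t, ∑ b ∈ Finset.range (f a), ((a : ℤ) * s - (b + 1) * t) := by
    rw [hAB, Finset.sum_biUnion hdisj]
    refine Finset.sum_congr rfl fun a _ => ?_
    rw [Finset.sum_image fun b hb c hc h =>
      hGinj a (Finset.mem_coe.mpr hb) (Finset.mem_coe.mpr hc) h]
    refine Finset.sum_congr rfl fun b hb => ?_
    rw [Finset.mem_range] at hb
    have h1 := hble a b hb
    rw [Nat.cast_sub h1]
    push_cast
    ring
  -- arithmetic relations
  have hfr : ∀ a : ℕ, (t : ℤ) * f a + r a = a * s := by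
    intro a
    simp only [hf, hr]
    exact_mod_cast Nat.div_add_mod (a * s) t
  have hQ1 := gauss1 t
  have hQ2 := gauss2 t
  have hR1 : ∑ a ∈ Finset.range t, ((r a : ℕ) : ℤ) = ∑ x ∈ Finset.range t, (x : ℤ) := by
    simp only [hr]; exact hperm (fun x => (x : ℤ))
  have hR2 : ∑ a ∈ Finset.range t, ((r a : ℕ) : ℤ) ^ 2 = ∑ x ∈ Finset.range t, (x : ℤ) ^ 2 := by
    simp only [hr]; exact hperm (fun x => (x : ℤ) ^ 2)
  have hT : ∀ a ∈ Finset.range t,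
      2 * (t : ℤ) * ∑ b ∈ Finset.range (f a), ((a : ℤ) * s - (b + 1) * t)
        = (s : ℤ) ^ 2 * (a : ℤ) ^ 2 - ((r a : ℕ) : ℤ) ^ 2 - (t : ℤ) * s * a
            + (t : ℤ) * ((r a : ℕ) : ℤ) := by
    intro a _
    have h1 := hfr a
    have h2 := sumlin (f a) ((a : ℤ) * s) (t : ℤ)
    linear_combination (t : ℤ) * h2
      + ((a : ℤ) * s - t - t * ((f a : ℕ) : ℤ) + ((r a : ℕ) : ℤ)) * h1
  have h2tS : 2 * (t : ℤ) * ∑ n ∈ A, (n : ℤ)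
      = ((s : ℤ) ^ 2 - 1) * (∑ x ∈ Finset.range t, (x : ℤ) ^ 2)
        - (t : ℤ) * ((s : ℤ) - 1) * (∑ x ∈ Finset.range t, (x : ℤ)) := by
    rw [hsum, Finset.mul_sum, Finset.sum_congr rfl hT, Finset.sum_add_distrib,
      Finset.sum_sub_distrib, Finset.sum_sub_distrib,
      ← Finset.mul_sum, ← Finset.mul_sum, ← Finset.mul_sum, hR1, hR2]
    ring
  have htF : (t : ℤ) * (A.card : ℤ) = ((s : ℤ) - 1) * ∑ x ∈ Finset.range t, (x : ℤ) := by
    rw [hcard, Finset.mul_sum]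
    have hstep : ∀ a ∈ Finset.range t,
        (t : ℤ) * ((f a : ℕ) : ℤ) = (a : ℤ) * s - ((r a : ℕ) : ℤ) := by
      intro a _; linarith [hfr a]
    rw [Finset.sum_congr rfl hstep, Finset.sum_sub_distrib, hR1, ← Finset.sum_mul]
    ring
  have htne : (t : ℤ) ≠ 0 := by positivity
  have h2F : 2 * (A.card : ℤ) = ((s : ℤ) - 1) * ((t : ℤ) - 1) := by
    apply mul_left_cancel₀ htne
    linear_combination 2 * htF + ((s : ℤ) - 1) * hQ1
  have h12S : 12 * ∑ n ∈ A, (n : ℤ)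
      = ((s : ℤ) ^ 2 - 1) * ((t : ℤ) - 1) * (2 * t - 1)
          - 3 * (t : ℤ) * ((s : ℤ) - 1) * ((t : ℤ) - 1) := by
    apply mul_left_cancel₀ htne
    linear_combination 6 * h2tS + ((s : ℤ) ^ 2 - 1) * hQ2
      - 3 * (t : ℤ) * ((s : ℤ) - 1) * hQ1
  have hC := choose2 A.card
  have hF2 : (2 * (A.card : ℤ)) ^ 2 = (((s : ℤ) - 1) * ((t : ℤ) - 1)) ^ 2 := by rw [h2F]
  linear_combination 2 * h12S - 12 * hC - 3 * hF2 + 6 * h2F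
end
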